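/- arXiv:1510.01271 — 3 statements merged into one kernel-verified Lean document; each statement's English description precedes it below -/
import Mathlib

section
/- Let G₁ and G₂ be finite simple graphs with vertex sets V₁, V₂. If G₁ is r₁-regular and G₂ is r₂-regular, then: if r₁ + |V₂| = r₂ + |V₁|, the join G₁ + G₂ is regular and cn(G₁+G₂) = |V₁| + |V₂|; otherwise cn(G₁+G₂) = max{|V₁|, |V₂|}. -/
open scoped Classical

/-- Number of vertices of `G` having degree `d`. -/
noncomputable def degCount {V : Type*} [Fintype V] (G : SimpleGraph V) (d : ℕ) : ℕ :=
  (Finset.univ.filter (fun v => G.degree v = d)).card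

/-- The curling number of a graph: the maximal multiplicity of a degree value. -/
noncomputable def curl {V : Type*} [Fintype V] (G : SimpleGraph V) : ℕ :=
  (Finset.univ.image (fun v => G.degree v)).sup (degCount G)

/-- The compound curling number: product of multiplicities of the distinct degree values. -/
noncomputable def curlc {V : Type*} [Fintype V] (G : SimpleGraph V) : ℕ :=
  ∏ d ∈ Finset.univ.image (fun v => G.degree v), degCount G d

/-- The join of two graphs. -/
def graphJoin {V W : Type*} (G : SimpleGraph V) (H : SimpleGraph W) : SimpleGraph (V ⊕ W) where
  Adj x y := match x, y with
    | .inl a, .inl b => G.Adj a b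
    | .inr a, .inr b => H.Adj a b
    | .inl _, .inr _ => True
    | .inr _, .inl _ => True
  symm := by
    constructor
    rintro (a | a) (b | b) h
    · exact G.adj_symm h
    · exact trivial
    · exact trivial
    · exact H.adj_symm h
  loopless := by
    constructor
    rintro (a | a) h
    · exact G.irrefl h
    · exact H.irrefl h

/-! In the join, every vertex of `V₁` has degree `r₁ + |V₂|` and every vertex of `V₂` has degree
`r₂ + |V₁|`, so the degree sequence consists of two constant blocks of sizes `|V₁|` and `|V₂|`,
which merge into one block exactly when the two degrees agree. -/

section curl

variable {V : Type*} [Fintype V] (G : SimpleGraph V)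

lemma degCount_le_card (d : ℕ) : degCount G d ≤ Fintype.card V :=
  Finset.card_filter_le _ _

lemma degCount_le_curl (d : ℕ) : degCount G d ≤ curl G := by
  by_cases hd : d ∈ Finset.univ.image fun v => G.degree v
  · exact Finset.le_sup hd
  · have hempty : Finset.univ.filter (fun v => G.degree v = d) = ∅ :=
      Finset.filter_false_of_mem fun v _ hv =>
        hd (Finset.mem_image.mpr ⟨v, Finset.mem_univ v, hv⟩)
    simp [degCount, hempty]

lemma curl_le_iff {n : ℕ} : curl G ≤ n ↔ ∀ v, degCount G (G.degree v) ≤ n := by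
  simp [curl]

lemma curl_le_card : curl G ≤ Fintype.card V :=
  (curl_le_iff G).mpr fun _ => degCount_le_card G _

lemma curl_eq_card_of_isRegularOfDegree {r : ℕ} (h : G.IsRegularOfDegree r) :
    curl G = Fintype.card V := by
  refine (curl_le_card G).antisymm ?_
  calc Fintype.card V = degCount G r := by
        simp [degCount, Finset.filter_true_of_mem fun v _ => h v]
    _ ≤ curl G := degCount_le_curl G r

end curl

section sum

variable {V W : Type*} [Fintype V] [Fintype W]

lemma degCount_eq_of_degree_inl_inr {G : SimpleGraph (V ⊕ W)} {d₁ d₂ : ℕ}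
    (h₁ : ∀ a, G.degree (.inl a) = d₁) (h₂ : ∀ b, G.degree (.inr b) = d₂) (d : ℕ) :
    degCount G d =
      (if d₁ = d then Fintype.card V else 0) + (if d₂ = d then Fintype.card W else 0) := by
  simp only [degCount, Finset.card_filter, Fintype.sum_sum_type, h₁, h₂]
  split_ifs <;> simp

lemma curl_eq_max_of_degree_inl_inr {G : SimpleGraph (V ⊕ W)} {d₁ d₂ : ℕ} (hd : d₁ ≠ d₂)
    (h₁ : ∀ a, G.degree (.inl a) = d₁) (h₂ : ∀ b, G.degree (.inr b) = d₂) :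
    curl G = max (Fintype.card V) (Fintype.card W) := by
  have hcount₁ : degCount G d₁ = Fintype.card V := by
    simp [degCount_eq_of_degree_inl_inr h₁ h₂, hd.symm]
  have hcount₂ : degCount G d₂ = Fintype.card W := by
    simp [degCount_eq_of_degree_inl_inr h₁ h₂, hd]
  refine le_antisymm ((curl_le_iff G).mpr ?_) ?_
  · rintro (a | b)
    · simp [h₁, hcount₁]
    · simp [h₂, hcount₂]
  · exact max_le (hcount₁ ▸ degCount_le_curl G d₁) (hcount₂ ▸ degCount_le_curl G d₂)

end sum

section join

variable {V W : Type*} [Fintype V] [Fintype W] (G : SimpleGraph V) (H : SimpleGraph W)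

lemma graphJoin_neighborFinset_inl (a : V) :
    (graphJoin G H).neighborFinset (.inl a) = (G.neighborFinset a).disjSum Finset.univ := by
  ext (b | c) <;> simp only [SimpleGraph.mem_neighborFinset, Finset.inl_mem_disjSum,
    Finset.inr_mem_disjSum, Finset.mem_univ] <;> rfl

lemma graphJoin_neighborFinset_inr (b : W) :
    (graphJoin G H).neighborFinset (.inr b) = Finset.univ.disjSum (H.neighborFinset b) := by
  ext (a | c) <;> simp only [SimpleGraph.mem_neighborFinset, Finset.inl_mem_disjSum,
    Finset.inr_mem_disjSum, Finset.mem_univ] <;> rfl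

lemma graphJoin_degree_inl (a : V) :
    (graphJoin G H).degree (.inl a) = G.degree a + Fintype.card W := by
  rw [← SimpleGraph.card_neighborFinset_eq_degree, graphJoin_neighborFinset_inl,
    Finset.card_disjSum, SimpleGraph.card_neighborFinset_eq_degree, Finset.card_univ]

lemma graphJoin_degree_inr (b : W) :
    (graphJoin G H).degree (.inr b) = H.degree b + Fintype.card V := by
  rw [← SimpleGraph.card_neighborFinset_eq_degree, graphJoin_neighborFinset_inr,
    Finset.card_disjSum, SimpleGraph.card_neighborFinset_eq_degree, Finset.card_univ, add_comm]

end join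

theorem stmt5 {V₁ V₂ : Type*} [Fintype V₁] [Fintype V₂]
    (G₁ : SimpleGraph V₁) (G₂ : SimpleGraph V₂) (r₁ r₂ : ℕ)
    (h₁ : G₁.IsRegularOfDegree r₁) (h₂ : G₂.IsRegularOfDegree r₂) :
    (r₁ + Fintype.card V₂ = r₂ + Fintype.card V₁ →
      (∃ r, (graphJoin G₁ G₂).IsRegularOfDegree r) ∧
      curl (graphJoin G₁ G₂) = Fintype.card V₁ + Fintype.card V₂) ∧
    (r₁ + Fintype.card V₂ ≠ r₂ + Fintype.card V₁ →
      curl (graphJoin G₁ G₂) = max (Fintype.card V₁) (Fintype.card V₂)) := by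
  have hdeg₁ (a : V₁) : (graphJoin G₁ G₂).degree (.inl a) = r₁ + Fintype.card V₂ := by
    rw [graphJoin_degree_inl, h₁ a]
  have hdeg₂ (b : V₂) : (graphJoin G₁ G₂).degree (.inr b) = r₂ + Fintype.card V₁ := by
    rw [graphJoin_degree_inr, h₂ b]
  refine ⟨fun heq => ?_, fun hne => curl_eq_max_of_degree_inl_inr hne hdeg₁ hdeg₂⟩
  have hreg : (graphJoin G₁ G₂).IsRegularOfDegree (r₁ + Fintype.card V₂) := by
    rintro (a | b)
    · exact hdeg₁ a
    · rw [hdeg₂ b, heq]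
  exact ⟨⟨_, hreg⟩, by rw [curl_eq_card_of_isRegularOfDegree _ hreg, Fintype.card_sum]⟩
end

section
/- For m, n ≥ 3, the planar grid graph P_m □ P_n has exactly (m−2)(n−2) vertices of degree 4, exactly 2(m+n−4) vertices of degree 3, and exactly 4 vertices of degree 2; hence cn(P_m □ P_n) = max{2(m+n−4), (m−2)(n−2)} and cn^c(P_m □ P_n) = 8(m−2)(n−2)(m+n−4). -/
open scoped Classical

/-! The degree of `(i, j)` in `P_m □ P_n` is `deg i + deg j`, and a path has two vertices of
degree 1 and `m - 2` of degree 2. Hence the number of grid vertices of degree `d` is the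
convolution `∑_{a + b = d} c_a c'_b` of the two path degree counts, which is nonzero exactly for
`d ∈ {2, 3, 4}`; the curling numbers are then the maximum and the product of these three
counts. -/

open Finset SimpleGraph

section

variable {V W : Type*} [Fintype V] [Fintype W]

lemma degCount_boxProd (G : SimpleGraph V) (H : SimpleGraph W) (d : ℕ) :
    degCount (G □ H) d = ∑ p ∈ antidiagonal d, degCount G p.1 * degCount H p.2 := by
  rw [degCount, card_eq_sum_card_fiberwise (t := antidiagonal d)
    (f := fun x : V × W => (G.degree x.1, H.degree x.2))]
  · refine sum_congr rfl fun p hp => ?_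
    rw [degCount, degCount, ← card_product, ← filter_product, ← univ_product_univ, filter_filter]
    congr 1
    refine filter_congr fun x _ => ?_
    rw [HasAntidiagonal.mem_antidiagonal] at hp
    simp only [Prod.ext_iff, degree_boxProd]
    omega
  · intro x hx
    simpa [degree_boxProd] using hx

lemma image_degree_eq_of_degCount_pos_iff (G : SimpleGraph V) {s : Finset ℕ}
    (hs : ∀ d, 0 < degCount G d ↔ d ∈ s) : univ.image (fun v => G.degree v) = s := by
  ext d
  simp [← hs, degCount, card_pos, filter_nonempty_iff]

end

section

variable {m n : ℕ}

lemma pathGraph_degree (hm : 2 ≤ m) (i : Fin m) :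
    (pathGraph m).degree i = if (i : ℕ) = 0 ∨ (i : ℕ) = m - 1 then 1 else 2 := by
  have hi := i.isLt
  rw [degree, neighborFinset_eq_filter]
  simp only [pathGraph_adj]
  obtain h | h | h : (i : ℕ) = 0 ∨ (i : ℕ) = m - 1 ∨ 0 < (i : ℕ) ∧ (i : ℕ) < m - 1 := by omega
  · rw [if_pos (.inl h), card_eq_one]
    exact ⟨⟨1, by omega⟩, by
      ext u; simp only [mem_filter, mem_univ, true_and, mem_singleton, Fin.ext_iff]; omega⟩
  · rw [if_pos (.inr h), card_eq_one]
    exact ⟨⟨m - 2, by omega⟩, by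
      ext u; simp only [mem_filter, mem_univ, true_and, mem_singleton, Fin.ext_iff]; omega⟩
  · rw [if_neg (by omega), card_eq_two]
    refine ⟨⟨i - 1, by omega⟩, ⟨i + 1, by omega⟩, by simp [Fin.ext_iff], ?_⟩
    ext u
    simp only [mem_filter, mem_univ, true_and, mem_insert, mem_singleton, Fin.ext_iff]
    omega

lemma degCount_pathGraph (hm : 2 ≤ m) (d : ℕ) :
    degCount (pathGraph m) d = if d = 1 then 2 else if d = 2 then m - 2 else 0 := by
  have hends : #{i : Fin m | (i : ℕ) = 0 ∨ (i : ℕ) = m - 1} = 2 :=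
    card_eq_two.2 ⟨⟨0, by omega⟩, ⟨m - 1, by omega⟩, by simp only [ne_eq, Fin.ext_iff]; omega,
      by ext; simp [Fin.ext_iff]⟩
  have hinner : #{i : Fin m | ¬((i : ℕ) = 0 ∨ (i : ℕ) = m - 1)} = m - 2 := by
    have := card_filter_add_card_filter_not (s := univ)
      (fun i : Fin m => (i : ℕ) = 0 ∨ (i : ℕ) = m - 1)
    simp only [card_univ, Fintype.card_fin] at this
    omega
  unfold degCount
  simp_rw [pathGraph_degree hm]
  split_ifs with h1 h2
  · subst h1; simpa [or_iff_not_imp_left] using hends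
  · subst h2; simpa using hinner
  · simp only [card_eq_zero, filter_eq_empty_iff]
    intro i _
    split_ifs <;> omega

lemma degCount_grid (hm : 2 ≤ m) (hn : 2 ≤ n) (d : ℕ) :
    degCount (pathGraph m □ pathGraph n) d =
      ∑ p ∈ antidiagonal d, (if p.1 = 1 then 2 else if p.1 = 2 then m - 2 else 0) *
        (if p.2 = 1 then 2 else if p.2 = 2 then n - 2 else 0) := by
  simp only [degCount_boxProd, degCount_pathGraph hm, degCount_pathGraph hn]

lemma degCount_grid_four (hm : 2 ≤ m) (hn : 2 ≤ n) :
    degCount (pathGraph m □ pathGraph n) 4 = (m - 2) * (n - 2) := by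
  simp [degCount_grid hm hn, Nat.sum_antidiagonal_eq_sum_range_succ_mk, sum_range_succ]

lemma degCount_grid_three (hm : 2 ≤ m) (hn : 2 ≤ n) :
    degCount (pathGraph m □ pathGraph n) 3 = 2 * (m + n - 4) := by
  have h : degCount (pathGraph m □ pathGraph n) 3 = 2 * (n - 2) + (m - 2) * 2 := by
    simp [degCount_grid hm hn, Nat.sum_antidiagonal_eq_sum_range_succ_mk, sum_range_succ]
  omega

lemma degCount_grid_two (hm : 2 ≤ m) (hn : 2 ≤ n) :
    degCount (pathGraph m □ pathGraph n) 2 = 4 := by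
  simp [degCount_grid hm hn, Nat.sum_antidiagonal_eq_sum_range_succ_mk, sum_range_succ]

lemma degCount_grid_eq_zero (hm : 2 ≤ m) (hn : 2 ≤ n) {d : ℕ}
    (hd : d ∉ ({2, 3, 4} : Finset ℕ)) : degCount (pathGraph m □ pathGraph n) d = 0 := by
  rw [degCount_grid hm hn]
  refine sum_eq_zero fun p hp => ?_
  simp only [mem_insert, mem_singleton, HasAntidiagonal.mem_antidiagonal] at hd hp
  split_ifs <;> omega

lemma degCount_grid_pos_iff (hm : 3 ≤ m) (hn : 3 ≤ n) (d : ℕ) :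
    0 < degCount (pathGraph m □ pathGraph n) d ↔ d ∈ ({2, 3, 4} : Finset ℕ) := by
  by_cases hd : d ∈ ({2, 3, 4} : Finset ℕ)
  · simp only [hd, iff_true]
    simp only [mem_insert, mem_singleton] at hd
    rcases hd with rfl | rfl | rfl
    · rw [degCount_grid_two (by omega) (by omega)]; omega
    · rw [degCount_grid_three (by omega) (by omega)]; omega
    · rw [degCount_grid_four (by omega) (by omega)]; exact Nat.mul_pos (by omega) (by omega)
  · simp [hd, degCount_grid_eq_zero (by omega : 2 ≤ m) (by omega : 2 ≤ n) hd]

end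

theorem stmt9 (m n : ℕ) (hm : 3 ≤ m) (hn : 3 ≤ n) :
    degCount ((SimpleGraph.pathGraph m).boxProd (SimpleGraph.pathGraph n)) 4 = (m - 2) * (n - 2) ∧
    degCount ((SimpleGraph.pathGraph m).boxProd (SimpleGraph.pathGraph n)) 3 = 2 * (m + n - 4) ∧
    degCount ((SimpleGraph.pathGraph m).boxProd (SimpleGraph.pathGraph n)) 2 = 4 ∧
    curl ((SimpleGraph.pathGraph m).boxProd (SimpleGraph.pathGraph n)) =
      max (2 * (m + n - 4)) ((m - 2) * (n - 2)) ∧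
    curlc ((SimpleGraph.pathGraph m).boxProd (SimpleGraph.pathGraph n)) =
      8 * (m - 2) * (n - 2) * (m + n - 4) := by
  have h4 := degCount_grid_four (by omega : 2 ≤ m) (by omega : 2 ≤ n)
  have h3 := degCount_grid_three (by omega : 2 ≤ m) (by omega : 2 ≤ n)
  have h2 := degCount_grid_two (by omega : 2 ≤ m) (by omega : 2 ≤ n)
  have himage := image_degree_eq_of_degCount_pos_iff _ (degCount_grid_pos_iff hm hn)
  refine ⟨h4, h3, h2, ?_, ?_⟩
  · rw [curl, himage, sup_insert, sup_insert, sup_singleton, h2, h3, h4, ← max_assoc,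
      max_eq_right (by omega : 4 ≤ 2 * (m + n - 4))]
  · rw [curlc, himage, prod_insert (by decide), prod_insert (by decide), prod_singleton,
      h2, h3, h4]
    ring
end

section
/- If G₁ is a k-regular graph on m vertices and G₂ is any finite graph, then cn(G₁ □ G₂) = m · cn(G₂). -/
open scoped Classical

/-! Every vertex of the `k`-regular factor shifts degrees by the same `k`, so each degree class of
`G₂` of size `t` becomes a degree class of `G₁ □ G₂` of size `|V₁| · t`, and the maximal class
scales by `|V₁|`. -/

open Finset SimpleGraph

lemma curl_eq_sup_degCount_degree {V : Type*} [Fintype V] (G : SimpleGraph V) :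
    curl G = univ.sup fun v => degCount G (G.degree v) :=
  sup_image _ _ _

lemma Finset.sup_univ_comp_snd {α β γ : Type*} [Fintype α] [Nonempty α] [Fintype β]
    [SemilatticeSup γ] [OrderBot γ] (f : β → γ) :
    (univ : Finset (α × β)).sup (fun x => f x.2) = univ.sup f := by
  rw [← univ_product_univ, sup_product_right]
  exact sup_congr rfl fun b _ => sup_const univ_nonempty (f b)

namespace SimpleGraph.IsRegularOfDegree

variable {V₁ V₂ : Type*} [Fintype V₁] [Fintype V₂] {G₁ : SimpleGraph V₁} {G₂ : SimpleGraph V₂}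
  {k : ℕ}

-- Stated for any `Fintype` instance: `curl` uses the classical one, not Mathlib's `boxProd` instance.
lemma degree_boxProd (h : G₁.IsRegularOfDegree k) (x : V₁ × V₂)
    [Fintype ((G₁ □ G₂).neighborSet x)] : (G₁ □ G₂).degree x = k + G₂.degree x.2 := by
  rw [← h x.1]
  convert SimpleGraph.degree_boxProd x

lemma degCount_boxProd (h : G₁.IsRegularOfDegree k) (d : ℕ) :
    degCount (G₁ □ G₂) (k + d) = Fintype.card V₁ * degCount G₂ d := by
  have hprod : degCount (G₁ □ G₂) (k + d) =
      #((univ : Finset V₁) ×ˢ univ.filter (fun v => G₂.degree v = d)) := by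
    unfold degCount
    congr 1
    ext x
    simp [h.degree_boxProd]
  rw [hprod, card_product, card_univ, degCount]

end SimpleGraph.IsRegularOfDegree

theorem stmt14 {V₁ V₂ : Type*} [Fintype V₁] [Fintype V₂]
    (G₁ : SimpleGraph V₁) (G₂ : SimpleGraph V₂) (k : ℕ)
    (h₁ : G₁.IsRegularOfDegree k) :
    curl (G₁.boxProd G₂) = Fintype.card V₁ * curl G₂ := by
  rcases isEmpty_or_nonempty V₁ with hV₁ | hV₁
  · simp [curl]
  calc curl (G₁ □ G₂)
      = univ.sup fun x : V₁ × V₂ => Fintype.card V₁ * degCount G₂ (G₂.degree x.2) := by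
        rw [curl_eq_sup_degCount_degree]
        refine sup_congr rfl fun x _ => ?_
        rw [h₁.degree_boxProd, h₁.degCount_boxProd]
    _ = univ.sup fun v => Fintype.card V₁ * degCount G₂ (G₂.degree v) :=
        sup_univ_comp_snd fun v => Fintype.card V₁ * degCount G₂ (G₂.degree v)
    _ = Fintype.card V₁ * curl G₂ := by
        rw [curl_eq_sup_degCount_degree, apply_sup_eq_sup_comp_of_linearOrder _
          (fun _ _ h => Nat.mul_le_mul_left _ h) (mul_zero _)]
        rfl
end
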